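/- Completeness of the abstract transition relation: let A be a timed automaton and ≼ a preorder on valuations whose lift to configurations is a time-abstract simulation for A, with associated abstraction a and abstract transition relation ⇒_a. If there is a run of A from (q0, 0̄) ending in a configuration (q, v), then there exists a set of valuations W such that v ∈ W and (q0, a(Z0)) ⇒_a^* (q, W). -/

import Mathlib

/-! Common framework: clocks, valuations, guards, zones, timed automata,
LU-bounds and LU-abstraction, following the paper's definitions. -/

abbrev Val (X : Type*) := X → NNReal

/-- Time delay: `v + δ`. -/
def delay {X : Type*} (v : Val X) (δ : NNReal) : Val X := fun x => v x + δ

open Classical in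
/-- Reset `[R]v`. -/
noncomputable def resetV {X : Type*} (R : Set X) (v : Val X) : Val X :=
  fun x => if x ∈ R then 0 else v x

/-- The valuation `0̄`. -/
def zeroVal (X : Type*) : Val X := fun _ => 0

/-- Comparison operators for atomic clock constraints. -/
inductive Cmp where
  | lt | le | eq | ge | gt

/-- Satisfaction of `a # c`. -/
def Cmp.sat : Cmp → NNReal → ℕ → Prop
  | .lt, a, c => a < (c : NNReal)
  | .le, a, c => a ≤ (c : NNReal)
  | .eq, a, c => a = (c : NNReal)
  | .ge, a, c => (c : NNReal) ≤ a
  | .gt, a, c => (c : NNReal) < a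

/-- An atomic clock constraint `x # c`. -/
structure Atomic (X : Type*) where
  clock : X
  cmp : Cmp
  bound : ℕ

/-- A guard is a finite conjunction of atomic constraints. -/
abbrev Guard (X : Type*) := List (Atomic X)

/-- `v ⊨ g`. -/
def satG {X : Type*} (v : Val X) (g : Guard X) : Prop :=
  ∀ a ∈ g, a.cmp.sat (v a.clock) a.bound

/-- Lower-bound constraints: `x > c` or `x ≥ c`. -/
def Atomic.isLower {X : Type*} (a : Atomic X) : Prop := a.cmp = Cmp.gt ∨ a.cmp = Cmp.ge

/-- Upper-bound constraints: `x < c` or `x ≤ c`. -/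
def Atomic.isUpper {X : Type*} (a : Atomic X) : Prop := a.cmp = Cmp.lt ∨ a.cmp = Cmp.le

/-- A set `W` of valuations is time-elapsed. -/
def TimeElapsed {X : Type*} (W : Set (Val X)) : Prop :=
  ∀ v ∈ W, ∀ δ : NNReal, delay v δ ∈ W

/-- `Post_{g,R}(W) = { [R]v + δ | v ∈ W, v ⊨ g, δ ∈ ℝ≥0 }`. -/
def post {X : Type*} (g : Guard X) (R : Set X) (W : Set (Val X)) : Set (Val X) :=
  { w | ∃ v ∈ W, satG v g ∧ ∃ δ : NNReal, w = delay (resetV R v) δ }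

/-- LU-bounds take values in `ℕ ∪ {−∞}`. -/
abbrev Bnd := WithBot ℕ

/-- `b < r` where `b ∈ ℕ ∪ {−∞}` and `r ∈ ℝ≥0` (every real is greater than `−∞`). -/
def Bnd.ltVal (b : Bnd) (r : NNReal) : Prop :=
  ∀ n : ℕ, b = (n : Bnd) → (n : NNReal) < r

/-- The LU-preorder `v ⊑_LU v'`. -/
def luLe {X : Type*} (L U : X → Bnd) (v v' : Val X) : Prop :=
  ∀ x, (v' x < v x → Bnd.ltVal (L x) (v' x)) ∧ (v x < v' x → Bnd.ltVal (U x) (v x))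

/-- `a_LU(W)`. -/
def aLU {X : Type*} (L U : X → Bnd) (W : Set (Val X)) : Set (Val X) :=
  { v | ∃ v' ∈ W, luLe L U v v' }

/-- A timed automaton `(Q, q0, X, T, Acc)` (finiteness of `Q`, `X`, `trans`
is imposed as hypotheses of the theorems). -/
structure TA (Q X : Type*) where
  q0 : Q
  trans : Set (Q × Guard X × Set X × Q)
  acc : Set Q

/-- One delay or action transition between configurations. -/
def step {Q X : Type*} (A : TA Q X) (c c' : Q × Val X) : Prop :=
  (c'.1 = c.1 ∧ ∃ δ : NNReal, c'.2 = delay c.2 δ) ∨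
  (∃ g R, (c.1, g, R, c'.1) ∈ A.trans ∧ satG c.2 g ∧ c'.2 = resetV R c.2)

/-- There is a run (finite alternating sequence of delay and action transitions)
from `c` to `c'`. -/
def Reach {Q X : Type*} (A : TA Q X) : (Q × Val X) → (Q × Val X) → Prop :=
  Relation.ReflTransGen (step A)

/-- Symbolic transition `(q,W) ⇒^t (q', Post_t(W))`, union over all `t ∈ T`. -/
def symbStep {Q X : Type*} (A : TA Q X) (p p' : Q × Set (Val X)) : Prop :=
  ∃ g R, (p.1, g, R, p'.1) ∈ A.trans ∧ p'.2 = post g R p.2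

/-- The initial zone `Z0 = { 0̄ + δ | δ ∈ ℝ≥0 }`. -/
def Z0 (X : Type*) : Set (Val X) := { v | ∃ δ : NNReal, v = delay (zeroVal X) δ }

/-- Time-abstract simulation for `A`. -/
def IsTASim {Q X : Type*} (A : TA Q X) (S : (Q × Val X) → (Q × Val X) → Prop) : Prop :=
  (∀ c c', S c c' → c.1 = c'.1) ∧
  (∀ (q : Q) (v v' : Val X) (δ : NNReal) (g : Guard X) (R : Set X) (q1 : Q),
    S (q, v) (q, v') → (q, g, R, q1) ∈ A.trans → satG (delay v δ) g →
    ∃ δ' : NNReal, satG (delay v' δ') g ∧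
      S (q1, resetV R (delay v δ)) (q1, resetV R (delay v' δ')))

/-- Abstraction induced by a preorder `≼` on valuations. -/
def aAbs {X : Type*} (pre : Val X → Val X → Prop) (W : Set (Val X)) : Set (Val X) :=
  { v | ∃ v' ∈ W, pre v v' }

/-- Abstract transition `(q,W) ⇒_a (q', a(W'))` whenever `W = a(W)` and `(q,W) ⇒ (q',W')`. -/
def absStep {Q X : Type*} (A : TA Q X) (pre : Val X → Val X → Prop)
    (p p' : Q × Set (Val X)) : Prop :=
  p.2 = aAbs pre p.2 ∧ ∃ W', symbStep A p (p'.1, W') ∧ p'.2 = aAbs pre W'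


/-! Abstraction only enlarges zones: `W ⊆ a(W)` by reflexivity of `≼`, and `a` is idempotent by
transitivity, so `a(Post(W))` is again a legal source of an abstract transition. Along a run one
therefore keeps an abstract node containing all time successors of the current valuation: a delay
stays inside it, and an action `t` with `v ⊨ g` lands in `Post_t(W) ⊆ a(Post_t(W))`. -/

section Abstraction

variable {X : Type*} {pre : Val X → Val X → Prop}

theorem delay_zero (v : Val X) : delay v 0 = v := by
  funext x
  simp [delay]

theorem delay_delay (v : Val X) (δ₁ δ₂ : NNReal) :
    delay (delay v δ₁) δ₂ = delay v (δ₁ + δ₂) := by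
  funext x
  simp [delay, add_assoc]

theorem range_delay_delay_subset (v : Val X) (δ : NNReal) :
    Set.range (delay (delay v δ)) ⊆ Set.range (delay v) := by
  rintro _ ⟨δ', rfl⟩
  exact ⟨δ + δ', (delay_delay v δ δ').symm⟩

theorem Z0_eq_range_delay : Z0 X = Set.range (delay (zeroVal X)) :=
  Set.ext fun _ => exists_congr fun _ => eq_comm

theorem range_delay_resetV_subset_post {W : Set (Val X)} {v : Val X} {g : Guard X}
    (R : Set X) (hv : v ∈ W) (hg : satG v g) :
    Set.range (delay (resetV R v)) ⊆ post g R W := by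
  rintro _ ⟨δ, rfl⟩
  exact ⟨v, hv, hg, δ, rfl⟩

theorem subset_aAbs (hrefl : ∀ v, pre v v) (W : Set (Val X)) : W ⊆ aAbs pre W :=
  fun v hv => ⟨v, hv, hrefl v⟩

theorem aAbs_aAbs (hrefl : ∀ v, pre v v) (htrans : ∀ u v w, pre u v → pre v w → pre u w)
    (W : Set (Val X)) : aAbs pre (aAbs pre W) = aAbs pre W := by
  refine (Set.Subset.antisymm ?_ (subset_aAbs hrefl _))
  rintro u ⟨v, ⟨w, hw, hvw⟩, huv⟩
  exact ⟨w, hw, htrans u v w huv hvw⟩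

theorem absStep_post {Q : Type*} {A : TA Q X} {q q' : Q} {g : Guard X} {R : Set X}
    {W : Set (Val X)} (hW : W = aAbs pre W) (ht : (q, g, R, q') ∈ A.trans) :
    absStep A pre (q, W) (q', aAbs pre (post g R W)) :=
  ⟨hW, post g R W, ⟨g, R, ht, rfl⟩, rfl⟩

theorem exists_absStep_reach_of_reach {Q : Type*} {A : TA Q X} (hrefl : ∀ v, pre v v)
    (htrans : ∀ u v w, pre u v → pre v w → pre u w) {c : Q × Val X}
    (hc : Reach A (A.q0, zeroVal X) c) :
    ∃ W : Set (Val X), Set.range (delay c.2) ⊆ W ∧ W = aAbs pre W ∧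
      Relation.ReflTransGen (absStep A pre) (A.q0, aAbs pre (Z0 X)) (c.1, W) := by
  induction hc with
  | refl =>
    refine ⟨aAbs pre (Z0 X), ?_, (aAbs_aAbs hrefl htrans _).symm, .refl⟩
    rw [← Z0_eq_range_delay]
    exact subset_aAbs hrefl _
  | @tail b c _ hstep ih =>
    obtain ⟨W, hsucc, hW, hreach⟩ := ih
    have hb : b.2 ∈ W := hsucc ⟨0, delay_zero b.2⟩
    rcases hstep with ⟨hq, δ, hd⟩ | ⟨g, R, ht, hg, hres⟩
    · refine ⟨W, ?_, hW, hq ▸ hreach⟩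
      rw [hd]
      exact (range_delay_delay_subset b.2 δ).trans hsucc
    · refine ⟨aAbs pre (post g R W), ?_, (aAbs_aAbs hrefl htrans _).symm,
        hreach.tail (absStep_post hW ht)⟩
      rw [hres]
      exact (range_delay_resetV_subset_post R hb hg).trans (subset_aAbs hrefl _)

end Abstraction

theorem stmt_5_general {Q X : Type*} (A : TA Q X)
    (pre : Val X → Val X → Prop)
    (hrefl : ∀ v, pre v v) (htrans : ∀ u v w, pre u v → pre v w → pre u w)
    (q : Q) (v : Val X) (hrun : Reach A (A.q0, zeroVal X) (q, v)) :
    ∃ W : Set (Val X), v ∈ W ∧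
      Relation.ReflTransGen (absStep A pre) (A.q0, aAbs pre (Z0 X)) (q, W) := by
  obtain ⟨W, hsucc, -, hreach⟩ := exists_absStep_reach_of_reach hrefl htrans hrun
  exact ⟨W, hsucc ⟨0, delay_zero v⟩, hreach⟩

/-- Completeness: if there is a run of `A` from `(q0, 0̄)` ending in
`(q, v)`, then there is `W` with `v ∈ W` and `(q0, a(Z0)) ⇒_a^* (q, W)`. -/
theorem stmt_5 {Q X : Type*} [Finite Q] [Finite X] (A : TA Q X) (hT : A.trans.Finite)
    (pre : Val X → Val X → Prop)
    (hrefl : ∀ v, pre v v) (htrans : ∀ u v w, pre u v → pre v w → pre u w)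
    (hsim : IsTASim A (fun c c' => c.1 = c'.1 ∧ pre c.2 c'.2))
    (q : Q) (v : Val X) (hrun : Reach A (A.q0, zeroVal X) (q, v)) :
    ∃ W : Set (Val X), v ∈ W ∧
      Relation.ReflTransGen (absStep A pre) (A.q0, aAbs pre (Z0 X)) (q, W) :=
  stmt_5_general A pre hrefl htrans q v hrun
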